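/- Let φ: ℝⁿ → ℝ≥0 be a semi-norm, k a positive integer, t ∈ ℤ₊ and w ≥ 0, and OPT(t,w) = max{φ(x) : ‖x‖₂ ≤ w, ‖x‖₀ ≤ t}. Then OPT(t,w) ≤ w·√⌈t/k⌉ · OPT(k,1). -/

import Mathlib

/-- The optimal value of the semi-norm SPCA problem with right-hand sides `t` (sparsity)
and `w` (Euclidean norm bound). -/
noncomputable def OPT (n : ℕ) (φ : EuclideanSpace ℝ (Fin n) → ℝ) (t : ℕ) (w : ℝ) : ℝ :=
  sSup (φ '' {x | ‖x‖ ≤ w ∧ (Finset.univ.filter (fun i => x i ≠ 0)).card ≤ t})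

/-! Split the support of `x` into `m = ⌈t/k⌉` blocks of at most `k` coordinates, so that `x` is a
sum of `m` vectors with disjoint supports. Rescaled to the unit sphere each block is feasible for
`OPT(k,1)`, so `φ(x_j) ≤ ‖x_j‖ OPT(k,1)`; subadditivity and Cauchy–Schwarz for the orthogonal blocks
give `φ(x) ≤ OPT(k,1) ∑ ‖x_j‖ ≤ √m ‖x‖ OPT(k,1)`. The blocks are peeled off one at a time, using
`a + √m b ≤ √(m+1) √(a² + b²)`. -/

open Finset Metric WithLp

theorem convexOn_univ_of_subadditive_of_posHomogeneous {E : Type*} [AddCommGroup E]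
    [Module ℝ E] {φ : E → ℝ} (hhom : ∀ l : ℝ, 0 ≤ l → ∀ x, φ (l • x) = l * φ x)
    (hsub : ∀ u v, φ (u + v) ≤ φ u + φ v) : ConvexOn ℝ Set.univ φ :=
  ⟨convex_univ, fun x _ y _ a b ha hb _ => by
    simpa only [hhom a ha, hhom b hb, smul_eq_mul] using hsub (a • x) (b • y)⟩

theorem bddAbove_image_closedBall_of_convexOn {E : Type*} [NormedAddCommGroup E]
    [NormedSpace ℝ E] [FiniteDimensional ℝ E] {φ : E → ℝ} (hφ : ConvexOn ℝ Set.univ φ)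
    (x : E) (r : ℝ) : BddAbove (φ '' closedBall x r) :=
  (isCompact_closedBall x r).bddAbove_image
    (continuousOn_univ.mp (hφ.continuousOn isOpen_univ)).continuousOn

theorem add_sqrt_mul_le_sqrt_add_one_mul {a b c m : ℝ} (hc : 0 ≤ c) (hm : 0 ≤ m)
    (habc : c ^ 2 = a ^ 2 + b ^ 2) :
    a + √m * b ≤ √(m + 1) * c := by
  refine le_of_sq_le_sq ?_ (by positivity)
  have hsm := Real.sq_sqrt hm
  rw [mul_pow, Real.sq_sqrt (by linarith), habc]
  nlinarith [sq_nonneg (√m * a - b)]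

theorem le_natCeil_div_mul (t : ℕ) {k : ℕ} (hk : 0 < k) : t ≤ ⌈(t : ℝ) / k⌉₊ * k := by
  have hk' : (0 : ℝ) < k := by exact_mod_cast hk
  have := Nat.le_ceil ((t : ℝ) / k)
  rw [div_le_iff₀ hk'] at this
  exact_mod_cast this

section Sparse

variable {ι : Type*} [Fintype ι]

theorem exists_add_of_card_support_le_add (x : EuclideanSpace ℝ ι) {k m : ℕ}
    (hx : #{i | x i ≠ 0} ≤ k + m) :
    ∃ y z : EuclideanSpace ℝ ι, x = y + z ∧ #{i | y i ≠ 0} ≤ k ∧ #{i | z i ≠ 0} ≤ m ∧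
      ‖x‖ ^ 2 = ‖y‖ ^ 2 + ‖z‖ ^ 2 := by
  classical
  set S : Finset ι := {i | x i ≠ 0}
  obtain ⟨A, hAS, hA⟩ := exists_subset_card_eq (min_le_right k #S)
  refine ⟨toLp 2 fun i => if i ∈ A then x i else 0, toLp 2 fun i => if i ∈ A then 0 else x i,
    ?_, ?_, ?_, ?_⟩
  · ext i
    by_cases h : i ∈ A <;> simp [h]
  · calc #{i | (if i ∈ A then x i else 0) ≠ 0} ≤ #A := card_le_card fun i => by simp; tauto
      _ ≤ k := hA ▸ min_le_left _ _
  · calc #{i | (if i ∈ A then 0 else x i) ≠ 0} ≤ #(S \ A) :=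
          card_le_card fun i => by simp [S]; tauto
      _ ≤ m := by rw [card_sdiff_of_subset hAS, hA]; omega
  · simp only [EuclideanSpace.real_norm_sq_eq, ← sum_add_distrib]
    refine sum_congr rfl fun i _ => ?_
    split_ifs <;> simp

theorem apply_le_sqrt_mul_norm_mul_of_card_support_le_mul {φ : EuclideanSpace ℝ ι → ℝ}
    (hsub : ∀ u v, φ (u + v) ≤ φ u + φ v) {k : ℕ} {c : ℝ} (hc : 0 ≤ c)
    (hsparse : ∀ y : EuclideanSpace ℝ ι, #{i | y i ≠ 0} ≤ k → φ y ≤ ‖y‖ * c) :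
    ∀ (m : ℕ) (x : EuclideanSpace ℝ ι), #{i | x i ≠ 0} ≤ m * k → φ x ≤ √m * ‖x‖ * c
  | 0, x, hx => by
    have hx0 : x = 0 := by
      ext i
      exact (by simpa using hx : ∀ i, x i = 0) i
    simpa [hx0] using hsparse 0 (by simp)
  | m + 1, x, hx => by
    obtain ⟨y, z, rfl, hy, hz, hyz⟩ :=
      exists_add_of_card_support_le_add (k := k) (m := m * k) x (hx.trans_eq (by ring))
    calc φ (y + z) ≤ ‖y‖ * c + √m * ‖z‖ * c :=
          (hsub y z).trans (add_le_add (hsparse y hy)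
            (apply_le_sqrt_mul_norm_mul_of_card_support_le_mul hsub hc hsparse m z hz))
      _ = (‖y‖ + √m * ‖z‖) * c := by ring
      _ ≤ √(m + 1 : ℕ) * ‖y + z‖ * c := by
          gcongr
          push_cast
          exact add_sqrt_mul_le_sqrt_add_one_mul (norm_nonneg _) m.cast_nonneg hyz

end Sparse

theorem apply_le_norm_mul_OPT {n k : ℕ} {φ : EuclideanSpace ℝ (Fin n) → ℝ}
    (hhom : ∀ l : ℝ, 0 ≤ l → ∀ x, φ (l • x) = l * φ x)
    (hbdd : BddAbove (φ '' {x | ‖x‖ ≤ 1 ∧ #{i | x i ≠ 0} ≤ k}))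
    (y : EuclideanSpace ℝ (Fin n)) (hy : #{i | y i ≠ 0} ≤ k) : φ y ≤ ‖y‖ * OPT n φ k 1 := by
  have hz : ‖‖y‖⁻¹ • y‖ ≤ 1 := by
    rw [norm_smul, norm_inv, norm_norm]
    exact inv_mul_le_one
  have hz' : #{i | (‖y‖⁻¹ • y) i ≠ 0} ≤ k :=
    (card_le_card fun i => by simp).trans hy
  calc φ y = ‖y‖ * φ (‖y‖⁻¹ • y) := by
        rw [← hhom _ (norm_nonneg y), smul_smul]
        obtain rfl | hy0 := eq_or_ne y 0
        · simp
        · rw [mul_inv_cancel₀ (norm_ne_zero_iff.mpr hy0), one_smul]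
    _ ≤ ‖y‖ * OPT n φ k 1 := by gcongr; exact le_csSup hbdd ⟨_, ⟨hz, hz'⟩, rfl⟩

theorem stmt_9_general (n : ℕ) (φ : EuclideanSpace ℝ (Fin n) → ℝ)
    (hhom : ∀ l : ℝ, 0 ≤ l → ∀ x, φ (l • x) = l * φ x)
    (hsub : ∀ u v, φ (u + v) ≤ φ u + φ v)
    (k t : ℕ) (hk : 1 ≤ k) (w : ℝ) (hw : 0 ≤ w) :
    OPT n φ t w ≤ w * Real.sqrt ((⌈(t : ℝ) / (k : ℝ)⌉ : ℤ) : ℝ) * OPT n φ k 1 := by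
  -- without this, `OPT n φ k 1` could be the junk value `sSup` takes on unbounded sets
  have hbdd : BddAbove (φ '' {x | ‖x‖ ≤ 1 ∧ #{i | x i ≠ 0} ≤ k}) :=
    (bddAbove_image_closedBall_of_convexOn
      (convexOn_univ_of_subadditive_of_posHomogeneous hhom hsub) 0 1).mono
      (Set.image_mono fun x hx => mem_closedBall_zero_iff.mpr hx.1)
  have hφ0 : φ 0 = 0 := by simpa using hhom 0 le_rfl 0
  have hOPT : 0 ≤ OPT n φ k 1 := hφ0 ▸ le_csSup hbdd ⟨0, by simp, rfl⟩
  have hbound := apply_le_sqrt_mul_norm_mul_of_card_support_le_mul hsub hOPT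
    (apply_le_norm_mul_OPT hhom hbdd)
  rw [← natCast_ceil_eq_intCast_ceil (by positivity)]
  refine csSup_le ⟨φ 0, 0, ⟨by simpa using hw, by simp⟩, rfl⟩ ?_
  rintro _ ⟨x, ⟨hxw, hxt⟩, rfl⟩
  calc φ x ≤ √⌈(t : ℝ) / k⌉₊ * ‖x‖ * OPT n φ k 1 :=
        hbound _ x (hxt.trans (le_natCeil_div_mul t hk))
    _ ≤ w * √⌈(t : ℝ) / k⌉₊ * OPT n φ k 1 := by
        rw [mul_comm w]
        gcongr

theorem stmt_9 (n : ℕ) (φ : EuclideanSpace ℝ (Fin n) → ℝ)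
    (hhom : ∀ l : ℝ, 0 ≤ l → ∀ x, φ (l • x) = l * φ x)
    (hsub : ∀ u v, φ (u + v) ≤ φ u + φ v)
    (hnonneg : ∀ x, 0 ≤ φ x)
    (hzero : φ 0 = 0)
    (k t : ℕ) (hk : 1 ≤ k) (w : ℝ) (hw : 0 ≤ w) :
    OPT n φ t w ≤ w * Real.sqrt ((⌈(t : ℝ) / (k : ℝ)⌉ : ℤ) : ℝ) * OPT n φ k 1 :=
  stmt_9_general n φ hhom hsub k t hk w hw
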